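/- arXiv:2503.24022 — 2 statements merged into one kernel-verified Lean document; each statement's English description precedes it below -/
import Mathlib

section
/- Let A ∈ ℝ^{n×n} be symmetric, b, x₀ ∈ ℝⁿ, let f(x) = ½ xᵀ A x + bᵀ x, and let x(t) = e^{At} y + t P_A b − A⁺ b where y = x₀ + A⁺ b. Then for all t ∈ ℝ, f(x(t)) = ½ (yᵀ A e^{2At} y − bᵀ A⁺ b) + t bᵀ P_A b + yᵀ P_A b. -/
open Matrix MeasureTheory ProbabilityTheory
open scoped Classical

noncomputable section

/-- Moore–Penrose pseudoinverse `A⁺` of a real square matrix: the unique `B` with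
`A B A = A`, `B A B = B`, and `A B`, `B A` symmetric. -/
def pinv {n : ℕ} (A : Matrix (Fin n) (Fin n) ℝ) : Matrix (Fin n) (Fin n) ℝ :=
  if h : ∃ B : Matrix (Fin n) (Fin n) ℝ,
      A * B * A = A ∧ B * A * B = B ∧ (A * B)ᵀ = A * B ∧ (B * A)ᵀ = B * A
  then h.choose else 0

/-- `P_A = I - A A⁺`, the orthogonal projection onto the null space of `A`. -/
def nullProj {n : ℕ} (A : Matrix (Fin n) (Fin n) ℝ) : Matrix (Fin n) (Fin n) ℝ :=
  1 - A * pinv A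

/-- The matrix exponential `e^A`. -/
def mexp {n : ℕ} (A : Matrix (Fin n) (Fin n) ℝ) : Matrix (Fin n) (Fin n) ℝ :=
  NormedSpace.exp A

/-- The (symmetric) positive semidefinite square root of a positive semidefinite matrix
(junk value `0` if no such root exists). -/
def msqrt {n : ℕ} (S : Matrix (Fin n) (Fin n) ℝ) : Matrix (Fin n) (Fin n) ℝ :=
  if h : ∃ B : Matrix (Fin n) (Fin n) ℝ, B.PosSemidef ∧ B * B = S then h.choose else 0

/-- The matrix logarithm of a symmetric positive definite matrix: the unique symmetric `A`
with `e^A = S` (junk value `0` if no such `A` exists). -/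
def matLog {n : ℕ} (S : Matrix (Fin n) (Fin n) ℝ) : Matrix (Fin n) (Fin n) ℝ :=
  if h : ∃ A : Matrix (Fin n) (Fin n) ℝ, A.IsSymm ∧ mexp A = S then h.choose else 0

/-- The quadratic potential `f(x) = ½ xᵀ A x + bᵀ x`. -/
def quadf {n : ℕ} (A : Matrix (Fin n) (Fin n) ℝ) (b x : Fin n → ℝ) : ℝ :=
  (1 / 2) * (x ⬝ᵥ (A *ᵥ x)) + b ⬝ᵥ x

/-- Squared Euclidean norm `‖v‖²` on `ℝⁿ`. -/
def sqNorm {n : ℕ} (v : Fin n → ℝ) : ℝ := ∑ i, (v i) ^ 2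

/-- Squared Frobenius norm `‖M‖_F²`. -/
def frobSq {n : ℕ} (M : Matrix (Fin n) (Fin n) ℝ) : ℝ := ∑ i, ∑ j, (M i j) ^ 2

/-- The flow map `φ : (t, x₀) ↦ x(t)` of the ODE `ẋ = A x + b`, `x(0) = x₀`. -/
def flowMap {n : ℕ} (A : Matrix (Fin n) (Fin n) ℝ) (b : Fin n → ℝ) :
    ℝ → (Fin n → ℝ) → (Fin n → ℝ) :=
  if h : ∃ φ : ℝ → (Fin n → ℝ) → (Fin n → ℝ),
      (∀ x₀, φ 0 x₀ = x₀) ∧ ∀ x₀ t, HasDerivAt (fun s => φ s x₀) (A *ᵥ (φ t x₀) + b) t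
  then h.choose else fun _ x => x

/-- The standard Gaussian measure on `ℝⁿ`. -/
def stdGaussianPi (n : ℕ) : Measure (Fin n → ℝ) :=
  Measure.pi fun _ => gaussianReal 0 1

/-- The multivariate Gaussian measure `N(μ, Σ)` on `ℝⁿ` (for `Σ` positive semidefinite),
realized as the pushforward of the standard Gaussian by `x ↦ μ + √Σ x`. -/
def multiGaussian {n : ℕ} (μ : Fin n → ℝ) (S : Matrix (Fin n) (Fin n) ℝ) :
    Measure (Fin n → ℝ) :=
  (stdGaussianPi n).map (fun x => μ + (msqrt S) *ᵥ x)

/-- The Wasserstein KL-divergence `D_WKL(μ‖ν)`: for the quadratic potential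
`f(x) = ½ xᵀ A x + bᵀ x` (`A` symmetric) whose gradient flow `φ` pushes `μ` forward to `ν`
at time 1, it is `∫ ∫₀¹ (f(φ₁ x) - f(φ_t x)) dt dμ(x)` (junk value `0` if no such `f`). -/
def DWKL {n : ℕ} (μ ν : Measure (Fin n → ℝ)) : ℝ :=
  if h : ∃ p : Matrix (Fin n) (Fin n) ℝ × (Fin n → ℝ),
      p.1.IsSymm ∧ μ.map (flowMap p.1 p.2 1) = ν then
    ∫ x, (∫ t in (0:ℝ)..1,
        (quadf h.choose.1 h.choose.2 (flowMap h.choose.1 h.choose.2 1 x)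
          - quadf h.choose.1 h.choose.2 (flowMap h.choose.1 h.choose.2 t x))) ∂μ
  else 0

/-- The flow map of the one-dimensional ODE `ẋ = a x + b`. -/
def flow1 (a b : ℝ) : ℝ → ℝ → ℝ :=
  if h : ∃ φ : ℝ → ℝ → ℝ,
      (∀ x₀, φ 0 x₀ = x₀) ∧ ∀ x₀ t, HasDerivAt (fun s => φ s x₀) (a * φ t x₀ + b) t
  then h.choose else fun _ x => x

/-- The quadratic potential `f(x) = ½ a x² + b x` on `ℝ`. -/
def quad1 (a b x : ℝ) : ℝ := (1 / 2) * a * x ^ 2 + b * x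

/-- The Wasserstein KL-divergence for measures on `ℝ`. -/
def DWKL1 (μ ν : Measure ℝ) : ℝ :=
  if h : ∃ p : ℝ × ℝ, μ.map (flow1 p.1 p.2 1) = ν then
    ∫ x, (∫ t in (0:ℝ)..1,
        (quad1 h.choose.1 h.choose.2 (flow1 h.choose.1 h.choose.2 1 x)
          - quad1 h.choose.1 h.choose.2 (flow1 h.choose.1 h.choose.2 t x))) ∂μ
  else 0

end

/-! For symmetric `A` the pseudoinverse `A⁺` is symmetric and commutes with `A` (diagonalize `A`
and invert its nonzero eigenvalues), so `P_A` is a symmetric projection with `A P_A = P_A A = 0`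
and hence `P_A e^{tA} = P_A`. Completing the square gives
`f(u - A⁺b) = ½ (uᵀAu - bᵀA⁺b) + bᵀ P_A u`. For `u = e^{tA} y + t P_A b` the null-space component
drops out of `uᵀAu`, which becomes `yᵀ e^{tA} A e^{tA} y = yᵀ A e^{2tA} y`, while
`P_A u = P_A y + t P_A b`. -/

theorem NormedSpace.mul_exp_eq_of_mul_eq_zero {𝔸 : Type*} [NormedRing 𝔸] [NormedAlgebra ℝ 𝔸]
    [CompleteSpace 𝔸] {c x : 𝔸} (h : c * x = 0) : c * NormedSpace.exp x = c := by
  rw [NormedSpace.exp_eq_tsum ℝ, ← (NormedSpace.expSeries_summable' (𝕂 := ℝ) x).tsum_mul_left,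
    tsum_eq_single 0]
  · simp
  · intro k hk
    obtain ⟨j, rfl⟩ := Nat.exists_eq_succ_of_ne_zero hk
    rw [mul_smul_comm, pow_succ', ← mul_assoc, h, zero_mul, smul_zero]

namespace Matrix

section MoorePenrose

variable {m n R : Type*} [Fintype m] [Fintype n]

def IsMoorePenroseInverse [CommRing R] (A : Matrix m n R) (B : Matrix n m R) : Prop :=
  A * B * A = A ∧ B * A * B = B ∧ (A * B)ᵀ = A * B ∧ (B * A)ᵀ = B * A

namespace IsMoorePenroseInverse

variable [CommRing R] {A : Matrix m n R} {B C : Matrix n m R}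

theorem unique (hB : IsMoorePenroseInverse A B) (hC : IsMoorePenroseInverse A C) : B = C := by
  obtain ⟨hB₁, hB₂, hB₃, hB₄⟩ := hB
  obtain ⟨hC₁, hC₂, hC₃, hC₄⟩ := hC
  have hAB : A * B = A * C := by
    calc A * B = (A * C) * (A * B) := by rw [← Matrix.mul_assoc, hC₁]
    _ = (A * C)ᵀ * (A * B)ᵀ := by rw [hC₃, hB₃]
    _ = (A * B * A * C)ᵀ := by simp only [transpose_mul, Matrix.mul_assoc]
    _ = A * C := by rw [hB₁, hC₃]
  have hBA : B * A = C * A := by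
    calc B * A = (B * A) * (C * A) := by rw [Matrix.mul_assoc, ← Matrix.mul_assoc A, hC₁]
    _ = (B * A)ᵀ * (C * A)ᵀ := by rw [hB₄, hC₄]
    _ = (C * (A * B * A))ᵀ := by simp only [transpose_mul, Matrix.mul_assoc]
    _ = C * A := by rw [hB₁, hC₄]
  calc B = B * A * B := hB₂.symm
  _ = C * A * C := by rw [hBA, Matrix.mul_assoc, hAB, ← Matrix.mul_assoc]
  _ = C := hC₂

theorem transpose (h : IsMoorePenroseInverse A B) : IsMoorePenroseInverse Aᵀ Bᵀ := by
  obtain ⟨h₁, h₂, h₃, h₄⟩ := h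
  refine ⟨?_, ?_, ?_, ?_⟩
  · rw [← transpose_mul, ← transpose_mul, ← Matrix.mul_assoc, h₁]
  · rw [← transpose_mul, ← transpose_mul, ← Matrix.mul_assoc, h₂]
  · rw [← transpose_mul, h₄, h₄]
  · rw [← transpose_mul, h₃, h₃]

theorem conj_orthogonal [DecidableEq m] {U : Matrix m m R} (hU : Uᵀ * U = 1) {A B : Matrix m m R}
    (h : IsMoorePenroseInverse A B) : IsMoorePenroseInverse (U * A * Uᵀ) (U * B * Uᵀ) := by
  have hmul (X Y : Matrix m m R) : U * X * Uᵀ * (U * Y * Uᵀ) = U * (X * Y) * Uᵀ := by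
    simp only [Matrix.mul_assoc, ← Matrix.mul_assoc Uᵀ U, hU, Matrix.one_mul]
  have htr (X : Matrix m m R) : (U * X * Uᵀ)ᵀ = U * Xᵀ * Uᵀ := by
    simp only [transpose_mul, transpose_transpose, Matrix.mul_assoc]
  obtain ⟨h₁, h₂, h₃, h₄⟩ := h
  refine ⟨?_, ?_, ?_, ?_⟩ <;> simp only [hmul, htr, h₁, h₂, h₃, h₄]

end IsMoorePenroseInverse

theorem isMoorePenroseInverse_diagonal [Field R] [DecidableEq m] (d : m → R) :
    IsMoorePenroseInverse (diagonal d) (diagonal d⁻¹) := by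
  have h₁ (a : R) : a * a⁻¹ * a = a := mul_inv_mul_cancel a
  have h₂ (a : R) : a⁻¹ * a * a⁻¹ = a⁻¹ := by simpa using h₁ a⁻¹
  refine ⟨?_, ?_, ?_, ?_⟩ <;>
    simp only [diagonal_mul_diagonal, diagonal_transpose, Pi.inv_def, h₁, h₂]

theorem exists_isMoorePenroseInverse_of_isSymm [DecidableEq m] {A : Matrix m m ℝ}
    (hA : A.IsSymm) : ∃ B, IsMoorePenroseInverse A B := by
  have hH : A.IsHermitian := isHermitian_iff_isSelfAdjoint.mpr hA
  set U : Matrix m m ℝ := ↑hH.eigenvectorUnitary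
  have hU : Uᵀ * U = 1 := by
    simpa [U, star_eq_conjTranspose, conjTranspose_eq_transpose_of_trivial] using
      Unitary.coe_star_mul_self hH.eigenvectorUnitary
  have hA' : A = U * diagonal hH.eigenvalues * Uᵀ := by
    simpa [U, star_eq_conjTranspose, conjTranspose_eq_transpose_of_trivial] using
      hH.spectral_theorem
  exact ⟨_, hA' ▸ (isMoorePenroseInverse_diagonal _).conj_orthogonal hU⟩

end MoorePenrose

theorem IsSymm.dotProduct_mulVec_comm {m R : Type*} [Fintype m] [CommRing R]
    {M : Matrix m m R} (hM : M.IsSymm) (u v : m → R) : u ⬝ᵥ M *ᵥ v = v ⬝ᵥ M *ᵥ u := by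
  rw [← dotProduct_transpose_mulVec, hM.eq]

theorem IsSymm.dotProduct_mulVec_add_of_mulVec_eq_zero {m R : Type*} [Fintype m]
    [CommRing R] {M : Matrix m m R} (hM : M.IsSymm) {v : m → R} (hv : M *ᵥ v = 0) (w : m → R) :
    (w + v) ⬝ᵥ M *ᵥ (w + v) = w ⬝ᵥ M *ᵥ w := by
  rw [mulVec_add, hv, add_zero, add_dotProduct, hM.dotProduct_mulVec_comm v, hv,
    dotProduct_zero, add_zero]

theorem mul_exp_eq_of_mul_eq_zero {m : Type*} [Fintype m] [DecidableEq m]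
    {C M : Matrix m m ℝ} (h : C * M = 0) : C * NormedSpace.exp M = C := by
  let : NormedRing (Matrix m m ℝ) := Matrix.linftyOpNormedRing
  let : NormedAlgebra ℝ (Matrix m m ℝ) := Matrix.linftyOpNormedAlgebra
  exact NormedSpace.mul_exp_eq_of_mul_eq_zero h

end Matrix

section PseudoInverse

variable {n : ℕ} {A : Matrix (Fin n) (Fin n) ℝ}

theorem isMoorePenroseInverse_pinv (hA : A.IsSymm) : A.IsMoorePenroseInverse (pinv A) := by
  rw [pinv]
  split_ifs with h
  · exact h.choose_spec
  · exact absurd (Matrix.exists_isMoorePenroseInverse_of_isSymm hA) h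

theorem pinv_transpose (hA : A.IsSymm) : (pinv A)ᵀ = pinv A :=
  (hA.eq ▸ (isMoorePenroseInverse_pinv hA).transpose).unique (isMoorePenroseInverse_pinv hA)

theorem pinv_mul_comm (hA : A.IsSymm) : pinv A * A = A * pinv A := by
  rw [← (isMoorePenroseInverse_pinv hA).2.2.2, transpose_mul, hA.eq, pinv_transpose hA]

theorem isSymm_nullProj (hA : A.IsSymm) : (nullProj A).IsSymm := by
  rw [Matrix.IsSymm, nullProj, transpose_sub, transpose_one,
    (isMoorePenroseInverse_pinv hA).2.2.1]

theorem nullProj_mul (hA : A.IsSymm) : nullProj A * A = 0 := by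
  rw [nullProj, Matrix.sub_mul, Matrix.one_mul, (isMoorePenroseInverse_pinv hA).1, sub_self]

theorem mul_nullProj (hA : A.IsSymm) : A * nullProj A = 0 := by
  rw [nullProj, Matrix.mul_sub, Matrix.mul_one, ← pinv_mul_comm hA, ← Matrix.mul_assoc,
    (isMoorePenroseInverse_pinv hA).1, sub_self]

theorem nullProj_mul_self (hA : A.IsSymm) : nullProj A * nullProj A = nullProj A := by
  nth_rw 2 [nullProj]
  rw [Matrix.mul_sub, Matrix.mul_one, ← Matrix.mul_assoc, nullProj_mul hA, Matrix.zero_mul,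
    sub_zero]

theorem nullProj_mul_mexp (hA : A.IsSymm) (t : ℝ) : nullProj A * mexp (t • A) = nullProj A :=
  Matrix.mul_exp_eq_of_mul_eq_zero (by rw [Matrix.mul_smul, nullProj_mul hA, smul_zero])

end PseudoInverse

section Potential

variable {n : ℕ} {A : Matrix (Fin n) (Fin n) ℝ}

theorem quadf_sub_pinv_mulVec (hA : A.IsSymm) (b u : Fin n → ℝ) :
    quadf A b (u - pinv A *ᵥ b) =
      (1 / 2) * (u ⬝ᵥ A *ᵥ u - b ⬝ᵥ pinv A *ᵥ b) + b ⬝ᵥ nullProj A *ᵥ u := by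
  obtain ⟨-, hBAB, hAB, -⟩ := isMoorePenroseInverse_pinv hA
  have hB : (pinv A).IsSymm := pinv_transpose hA
  have cross₁ : u ⬝ᵥ A *ᵥ (pinv A *ᵥ b) = b ⬝ᵥ (A * pinv A) *ᵥ u := by
    rw [mulVec_mulVec, Matrix.IsSymm.dotProduct_mulVec_comm hAB]
  have cross₂ : (pinv A *ᵥ b) ⬝ᵥ A *ᵥ u = b ⬝ᵥ (A * pinv A) *ᵥ u := by
    rw [dotProduct_comm, ← dotProduct_transpose_mulVec, hB.eq, mulVec_mulVec,
      pinv_mul_comm hA]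
  have diag : (pinv A *ᵥ b) ⬝ᵥ A *ᵥ (pinv A *ᵥ b) = b ⬝ᵥ pinv A *ᵥ b := by
    rw [dotProduct_comm, ← dotProduct_transpose_mulVec, hB.eq, mulVec_mulVec,
      mulVec_mulVec, hBAB]
  simp only [quadf, nullProj, mulVec_sub, sub_dotProduct, dotProduct_sub,
    sub_mulVec, one_mulVec, cross₁, cross₂, diag]
  ring

theorem mexp_mulVec_dotProduct_mulVec (hA : A.IsSymm) (t : ℝ) (y : Fin n → ℝ) :
    (mexp (t • A) *ᵥ y) ⬝ᵥ A *ᵥ (mexp (t • A) *ᵥ y) = y ⬝ᵥ (A * mexp ((2 * t) • A)) *ᵥ y := by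
  have hE : (mexp (t • A)).IsSymm := (hA.smul t).exp
  have hAE : A * mexp (t • A) = mexp (t • A) * A := ((Commute.refl A).smul_right t).exp_right
  have hEE : mexp (t • A) * mexp (t • A) = mexp ((2 * t) • A) := by
    unfold mexp
    rw [← Matrix.exp_add_of_commute _ _ (Commute.refl _), ← add_smul, two_mul]
  rw [dotProduct_comm, ← dotProduct_transpose_mulVec, hE.eq, mulVec_mulVec,
    mulVec_mulVec, ← hAE, Matrix.mul_assoc, hEE]

theorem nullProj_mulVec_mexp_add (hA : A.IsSymm) (t : ℝ) (y b : Fin n → ℝ) :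
    nullProj A *ᵥ (mexp (t • A) *ᵥ y + t • (nullProj A *ᵥ b)) =
      nullProj A *ᵥ y + t • (nullProj A *ᵥ b) := by
  rw [mulVec_add, mulVec_smul, mulVec_mulVec, mulVec_mulVec,
    nullProj_mul_mexp hA, nullProj_mul_self hA]

end Potential

theorem stmt1_general {n : ℕ} (A : Matrix (Fin n) (Fin n) ℝ) (hA : A.IsSymm) (b y : Fin n → ℝ)
    (x : ℝ → (Fin n → ℝ))
    (hx : ∀ t : ℝ, x t = mexp (t • A) *ᵥ y + t • (nullProj A *ᵥ b) - pinv A *ᵥ b) :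
    ∀ t : ℝ, quadf A b (x t) =
      (1 / 2) * (y ⬝ᵥ ((A * mexp ((2 * t) • A)) *ᵥ y) - b ⬝ᵥ (pinv A *ᵥ b))
        + t * (b ⬝ᵥ (nullProj A *ᵥ b)) + y ⬝ᵥ (nullProj A *ᵥ b) := by
  intro t
  have hAP : A *ᵥ (t • (nullProj A *ᵥ b)) = 0 := by
    rw [mulVec_smul, mulVec_mulVec, mul_nullProj hA, zero_mulVec, smul_zero]
  rw [hx t, quadf_sub_pinv_mulVec hA, hA.dotProduct_mulVec_add_of_mulVec_eq_zero hAP,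
    mexp_mulVec_dotProduct_mulVec hA, nullProj_mulVec_mexp_add hA, dotProduct_add,
    dotProduct_smul, smul_eq_mul, (isSymm_nullProj hA).dotProduct_mulVec_comm b y]
  ring

/-- Value of the quadratic potential along the solution curve. -/
theorem stmt1 {n : ℕ} (A : Matrix (Fin n) (Fin n) ℝ) (hA : A.IsSymm) (b x₀ y : Fin n → ℝ)
    (hy : y = x₀ + pinv A *ᵥ b) (x : ℝ → (Fin n → ℝ))
    (hx : ∀ t : ℝ, x t = mexp (t • A) *ᵥ y + t • (nullProj A *ᵥ b) - pinv A *ᵥ b) :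
    ∀ t : ℝ, quadf A b (x t) =
      (1 / 2) * (y ⬝ᵥ ((A * mexp ((2 * t) • A)) *ᵥ y) - b ⬝ᵥ (pinv A *ᵥ b))
        + t * (b ⬝ᵥ (nullProj A *ᵥ b)) + y ⬝ᵥ (nullProj A *ᵥ b) :=
  stmt1_general A hA b y x hx
end

section
/- (Corollary 1, equal variances) Let μ = N(μ₀, σ²) and ν = N(μ₁, σ²) be univariate Gaussian measures on ℝ with σ > 0. Then D_WKL(μ ∥ ν) = ½ (μ₁ − μ₀)². -/
open Matrix MeasureTheory ProbabilityTheory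
open scoped Classical

/-!
The time-one map of `ẋ = a x + b` is an affine map `x ↦ eᵃ x + c`, which pushes `N(m, v)` to
`N(eᵃ m + c, e²ᵃ v)`. Equal nonzero variances force `a = 0`, so the flow is the translation
`φ_t x = x + t (μ₁ - μ₀)` and `f x = (μ₁ - μ₀) x`. The integrand `f (φ₁ x) - f (φ_t x)` is then
`(1 - t) (μ₁ - μ₀)²`, independent of `x`, and integrates to `(μ₁ - μ₀)² / 2`.
-/

noncomputable def affineFlow (a b t x : ℝ) : ℝ :=
  if a = 0 then x + b * t else Real.exp (a * t) * x + b / a * (Real.exp (a * t) - 1)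

lemma affineFlow_zero_time (a b x : ℝ) : affineFlow a b 0 x = x := by
  unfold affineFlow; split_ifs <;> simp

lemma affineFlow_zero_left (b t x : ℝ) : affineFlow 0 b t x = x + b * t := by
  simp [affineFlow]

lemma affineFlow_eq_exp_mul_add (a b t x : ℝ) :
    affineFlow a b t x = Real.exp (a * t) * x + affineFlow a b t 0 := by
  unfold affineFlow; split_ifs with ha <;> simp [ha]

lemma hasDerivAt_affineFlow (a b x t : ℝ) :
    HasDerivAt (fun s => affineFlow a b s x) (a * affineFlow a b t x + b) t := by
  rcases eq_or_ne a 0 with rfl | ha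
  · simp only [affineFlow_zero_left]
    simpa using ((hasDerivAt_id t).const_mul b).const_add x
  · simp only [affineFlow, if_neg ha]
    have hexp : HasDerivAt (fun s => Real.exp (a * s)) (Real.exp (a * t) * (a * 1)) t :=
      ((hasDerivAt_id t).const_mul a).exp
    refine ((hexp.mul_const x).add ((hexp.sub_const 1).const_mul (b / a))).congr_deriv ?_
    field_simp
    ring

lemma eq_affineFlow_of_hasDerivAt {a b : ℝ} {φ : ℝ → ℝ → ℝ} (h0 : ∀ x, φ 0 x = x)
    (hφ : ∀ x t, HasDerivAt (fun s => φ s x) (a * φ t x + b) t) (t x : ℝ) :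
    φ t x = affineFlow a b t x := by
  -- the difference of two solutions, damped by `e^{-as}`, has zero derivative
  set g : ℝ → ℝ := fun s => Real.exp (-(a * s)) * (φ s x - affineFlow a b s x)
  have hg : ∀ s, HasDerivAt g 0 s := fun s => by
    have hexp : HasDerivAt (fun u => Real.exp (-(a * u))) (Real.exp (-(a * s)) * -(a * 1)) s :=
      ((hasDerivAt_id s).const_mul a).neg.exp
    refine (hexp.mul ((hφ x s).sub (hasDerivAt_affineFlow a b x s))).congr_deriv ?_
    simp only [Pi.sub_apply]
    ring
  have hconst : g t = g 0 :=
    is_const_of_deriv_eq_zero (fun u => (hg u).differentiableAt) (fun u => (hg u).deriv) t 0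
  simpa [g, h0, affineFlow_zero_time, Real.exp_ne_zero, sub_eq_zero] using hconst

lemma flow1_eq_affineFlow (a b : ℝ) : flow1 a b = affineFlow a b := by
  have hex : ∃ φ : ℝ → ℝ → ℝ,
      (∀ x₀, φ 0 x₀ = x₀) ∧ ∀ x₀ t, HasDerivAt (fun s => φ s x₀) (a * φ t x₀ + b) t :=
    ⟨affineFlow a b, affineFlow_zero_time a b, hasDerivAt_affineFlow a b⟩
  rw [flow1, dif_pos hex]
  funext t x
  exact eq_affineFlow_of_hasDerivAt hex.choose_spec.1 hex.choose_spec.2 t x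

lemma gaussianReal_map_affine (m : ℝ) (v : NNReal) (k c : ℝ) :
    (gaussianReal m v).map (fun x => k * x + c) =
      gaussianReal (k * m + c) (⟨k ^ 2, sq_nonneg k⟩ * v) := by
  rw [← Function.comp_def (· + c) (k * ·),
    ← Measure.map_map (measurable_add_const c) (measurable_const_mul k),
    gaussianReal_map_const_mul, gaussianReal_map_add_const]
  rfl

lemma gaussianReal_map_flow1 (m : ℝ) (v : NNReal) (a b : ℝ) :
    (gaussianReal m v).map (flow1 a b 1) =
      gaussianReal (Real.exp a * m + flow1 a b 1 0) (⟨Real.exp a ^ 2, sq_nonneg _⟩ * v) := by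
  have hflow : flow1 a b 1 = fun x => Real.exp a * x + flow1 a b 1 0 := by
    funext x
    rw [flow1_eq_affineFlow, affineFlow_eq_exp_mul_add, mul_one]
  conv_lhs => rw [hflow]
  rw [gaussianReal_map_affine]

lemma map_gaussianReal_flow1_eq_iff {m₀ m₁ : ℝ} {v : NNReal} (hv : v ≠ 0) (a b : ℝ) :
    (gaussianReal m₀ v).map (flow1 a b 1) = gaussianReal m₁ v ↔ a = 0 ∧ b = m₁ - m₀ := by
  rw [gaussianReal_map_flow1, gaussianReal_ext_iff]
  constructor
  · rintro ⟨hmean, hvar⟩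
    have hexp_sq : Real.exp a ^ 2 = 1 :=
      (mul_eq_right₀ (NNReal.coe_ne_zero.mpr hv)).mp (congrArg NNReal.toReal hvar)
    have ha : a = 0 := Real.exp_eq_one_iff a |>.mp <|
      (pow_eq_one_iff_of_nonneg (Real.exp_pos a).le two_ne_zero).mp hexp_sq
    subst ha
    rw [flow1_eq_affineFlow, affineFlow_zero_left] at hmean
    simp only [Real.exp_zero, one_mul, mul_one, zero_add] at hmean
    exact ⟨rfl, by linarith⟩
  · rintro ⟨rfl, rfl⟩
    simp only [flow1_eq_affineFlow, affineFlow_zero_left, Real.exp_zero, one_pow]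
    exact ⟨by ring, one_mul v⟩

lemma DWKL1_eq_of_unique_flow {μ ν : Measure ℝ} {a b : ℝ}
    (h : ∀ p : ℝ × ℝ, μ.map (flow1 p.1 p.2 1) = ν ↔ p = (a, b)) :
    DWKL1 μ ν = ∫ x, (∫ t in (0:ℝ)..1,
      (quad1 a b (flow1 a b 1 x) - quad1 a b (flow1 a b t x))) ∂μ := by
  have hex : ∃ p : ℝ × ℝ, μ.map (flow1 p.1 p.2 1) = ν := ⟨(a, b), (h _).2 rfl⟩
  rw [DWKL1, dif_pos hex, (h _).1 hex.choose_spec]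

lemma intervalIntegral_quad1_translation (b x : ℝ) :
    ∫ t in (0:ℝ)..1, (quad1 0 b (flow1 0 b 1 x) - quad1 0 b (flow1 0 b t x)) = b ^ 2 / 2 := by
  simp only [flow1_eq_affineFlow, affineFlow_zero_left, quad1]
  have hintegrand : ∀ t : ℝ, 1 / 2 * 0 * (x + b * 1) ^ 2 + b * (x + b * 1)
      - (1 / 2 * 0 * (x + b * t) ^ 2 + b * (x + b * t)) = b ^ 2 * (1 - t) := fun t => by ring
  simp_rw [hintegrand]
  rw [intervalIntegral.integral_const_mul, intervalIntegral.integral_sub intervalIntegrable_const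
    intervalIntegral.intervalIntegrable_id, integral_id]
  norm_num
  ring

lemma DWKL1_eq_of_unique_translation {μ ν : Measure ℝ} [IsProbabilityMeasure μ] {b : ℝ}
    (h : ∀ p : ℝ × ℝ, μ.map (flow1 p.1 p.2 1) = ν ↔ p = (0, b)) :
    DWKL1 μ ν = b ^ 2 / 2 := by
  simp_rw [DWKL1_eq_of_unique_flow h, intervalIntegral_quad1_translation]
  rw [integral_const, probReal_univ, smul_eq_mul, one_mul]

/-- **Corollary 1, equal variances.** -/
theorem stmt16 (μ₀ μ₁ σ : ℝ) (hσ : 0 < σ) :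
    DWKL1 (gaussianReal μ₀ ⟨σ ^ 2, sq_nonneg σ⟩) (gaussianReal μ₁ ⟨σ ^ 2, sq_nonneg σ⟩) =
      (1 / 2) * (μ₁ - μ₀) ^ 2 := by
  -- instance search does not see through the bare `⟨σ ^ 2, _⟩ : {r : ℝ // 0 ≤ r}`
  set v : NNReal := ⟨σ ^ 2, sq_nonneg σ⟩
  have hv : v ≠ 0 := NNReal.coe_ne_zero.mp (pow_ne_zero 2 hσ.ne')
  rw [DWKL1_eq_of_unique_translation fun p => by
    rw [map_gaussianReal_flow1_eq_iff hv, Prod.ext_iff]]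
  ring
end
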